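/- For 1<q<p and every λ ∈ [0,1), the strict inequality ω_p(λ^{p−1}) < ω_q(λ^{q−1}) holds. -/

import Mathlib

open Real Set

/-!
Let `a = ω_q(λ^(q-1)) ∈ (1, q/(q-1)]`, `y = (q-1)(a-1) ∈ (0,1]` and `γ = (p-1)/(q-1) > 1`.
Since `H_r(a) = a^(r-1) (1 - (r-1)(a-1))`, we get `λ^(p-1) = H_q(a)^γ = a^(p-1) (1-y)^γ`, while
`H_p(a) = a^(p-1) (1 - γ y)`. Bernoulli's inequality `1 - γ y < (1-y)^γ` thus gives
`H_p(a) < λ^(p-1) = H_p(ω_p(λ^(p-1)))`, and as `H_p` is decreasing on `[1, ∞)`,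
`ω_p(λ^(p-1)) < a`.
-/

noncomputable def H (r z : ℝ) : ℝ := r * z ^ (r - 1) - (r - 1) * z ^ r

lemma H_one (r : ℝ) : H r 1 = 1 := by
  simp [H]

lemma H_eq_mul (r : ℝ) {z : ℝ} (hz : 0 < z) :
    H r z = z ^ (r - 1) * (1 - (r - 1) * (z - 1)) := by
  have : z ^ r = z ^ (r - 1) * z := by
    rw [← rpow_add_one hz.ne', sub_add_cancel]
  rw [H, this]
  ring

lemma hasDerivAt_H (r : ℝ) {z : ℝ} (hz : 0 < z) :
    HasDerivAt (H r) (r * (r - 1) * z ^ (r - 2) * (1 - z)) z := by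
  have h : HasDerivAt (H r) (r * ((r - 1) * z ^ (r - 1 - 1)) - (r - 1) * (r * z ^ (r - 1))) z :=
    ((hasDerivAt_rpow_const (Or.inl hz.ne')).const_mul r).sub
      ((hasDerivAt_rpow_const (Or.inl hz.ne')).const_mul (r - 1))
  convert h using 1
  rw [show r - 1 - 1 = r - 2 by ring, show r - 1 = r - 2 + 1 by ring, rpow_add_one hz.ne']
  ring

lemma antitoneOn_H {r : ℝ} (hr : 1 ≤ r) : AntitoneOn (H r) (Ici 1) := by
  have hderiv : ∀ z ∈ Ici (1 : ℝ), HasDerivAt (H r) (r * (r - 1) * z ^ (r - 2) * (1 - z)) z :=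
    fun z hz => hasDerivAt_H r (zero_lt_one.trans_le hz)
  refine antitoneOn_of_hasDerivWithinAt_nonpos (convex_Ici 1)
    (fun z hz => (hderiv z hz).continuousAt.continuousWithinAt)
    (fun z hz => (hderiv z (interior_subset hz)).hasDerivWithinAt) fun z hz => ?_
  rw [interior_Ici, mem_Ioi] at hz
  have : 0 ≤ r * (r - 1) * z ^ (r - 2) :=
    mul_nonneg (by nlinarith) (rpow_nonneg (by linarith) _)
  exact mul_nonpos_of_nonneg_of_nonpos this (by linarith)

lemma H_lt_H_rpow {p q a : ℝ} (hq : 1 < q) (hpq : q < p) (ha : a ∈ Ioc 1 (q / (q - 1))) :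
    H p a < H q a ^ ((p - 1) / (q - 1)) := by
  obtain ⟨ha1, haq⟩ := ha
  have ha0 : 0 < a := zero_lt_one.trans ha1
  have hq1 : 0 < q - 1 := by linarith
  have hy0 : 0 < (q - 1) * (a - 1) := mul_pos hq1 (by linarith)
  have hy1 : (q - 1) * (a - 1) ≤ 1 := by
    rw [le_div_iff₀ hq1] at haq
    linarith
  have hγ : 1 < (p - 1) / (q - 1) := by
    rw [one_lt_div hq1]; linarith
  have hbern := one_add_mul_self_lt_rpow_one_add (s := -((q - 1) * (a - 1)))
    (by linarith) (by linarith) hγ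
  have hpy : (p - 1) * (a - 1) = (p - 1) / (q - 1) * ((q - 1) * (a - 1)) := by
    field_simp
  rw [H_eq_mul p ha0, H_eq_mul q ha0, mul_rpow (rpow_nonneg ha0.le _) (by linarith),
    ← rpow_mul ha0.le, mul_div_cancel₀ _ hq1.ne', hpy]
  rw [← sub_eq_add_neg] at hbern
  exact mul_lt_mul_of_pos_left (by linarith) (rpow_pos_of_pos ha0 _)

/-- For `1 < q < p` and every `λ ∈ [0,1)`, `ω_p(λ^(p-1)) < ω_q(λ^(q-1))`. -/
theorem omega_p_lt_omega_q (p q : ℝ) (hq : 1 < q) (hpq : q < p)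
    (ωp ωq : ℝ → ℝ)
    (hωp : ∀ s ∈ Icc (0 : ℝ) 1, ωp s ∈ Icc 1 (p / (p - 1)) ∧
      p * ωp s ^ (p - 1) - (p - 1) * ωp s ^ p = s)
    (hωq : ∀ s ∈ Icc (0 : ℝ) 1, ωq s ∈ Icc 1 (q / (q - 1)) ∧
      q * ωq s ^ (q - 1) - (q - 1) * ωq s ^ q = s) :
    ∀ l ∈ Ico (0 : ℝ) 1, ωp (l ^ (p - 1)) < ωq (l ^ (q - 1)) := by
  rintro l ⟨hl0, hl1⟩
  have hq1 : 0 < q - 1 := by linarith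
  have hlq : l ^ (q - 1) < 1 := rpow_lt_one hl0 hl1 hq1
  obtain ⟨⟨hw1, -⟩, hw : H p (ωp (l ^ (p - 1))) = l ^ (p - 1)⟩ :=
    hωp _ ⟨rpow_nonneg hl0 _, rpow_le_one hl0 hl1.le (by linarith : (0 : ℝ) ≤ p - 1)⟩
  obtain ⟨⟨ha1, haq⟩, ha : H q (ωq (l ^ (q - 1))) = l ^ (q - 1)⟩ :=
    hωq _ ⟨rpow_nonneg hl0 _, hlq.le⟩
  have ha_ne : ωq (l ^ (q - 1)) ≠ 1 := fun h => by
    rw [h, H_one] at ha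
    linarith
  have hlt : H p (ωq (l ^ (q - 1))) < H p (ωp (l ^ (p - 1))) :=
    calc H p (ωq (l ^ (q - 1))) < H q (ωq (l ^ (q - 1))) ^ ((p - 1) / (q - 1)) :=
          H_lt_H_rpow hq hpq ⟨lt_of_le_of_ne ha1 (Ne.symm ha_ne), haq⟩
      _ = l ^ (p - 1) := by rw [ha, ← rpow_mul hl0, mul_div_cancel₀ _ hq1.ne']
      _ = H p (ωp (l ^ (p - 1))) := hw.symm
  by_contra! hle
  exact (antitoneOn_H (by linarith) ha1 hw1 hle).not_gt hlt
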